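/- arXiv:1701.00062 — 2 statements merged into one kernel-verified Lean document; each statement's English description precedes it below -/
import Mathlib

section
/- (λ-preserving symmetries of the SBM.) Let ι be a finite index set with at least two elements, let π and ω be permutations of ι, and let γ : ι → {0,1}. Define, for weights α in the simplex (α_i ≥ 0, ∑_i α_i = 1) and probability vectors p ∈ [0,1]^ι, the transformation α'_i = α_{π(i)} and p'_i = γ_i + (1 − 2γ_i)·p_{ω(i)}. If for every α in the simplex and every p ∈ [0,1]^ι one has h(∑_i α'_i p'_i) − ∑_i α'_i h(p'_i) = h(∑_i α_i p_i) − ∑_i α_i h(p_i), then necessarily ω = π and γ is constant, i.e., γ_i = γ for all i with γ ∈ {0,1}. Conversely, if ω = π and γ is constant then the transformation preserves h(∑_i α_i p_i) − ∑_i α_i h(p_i) for all such (α,p). -/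
/-!
The converse is bookkeeping: relabelling weights and probabilities by the same permutation only
reorders the sums, and a global flip `p ↦ 1 - p` preserves both `h` and the mean.

For the forward direction it suffices to test two-point weights. With weights `1/2, 1/2` on `i, j`
and `p ≡ 1/4` the right-hand side vanishes, while flips `γ i ≠ γ j` produce the values `1/4, 3/4`
and the gap `h(1/2) - h(1/4) > 0`. Once `γ` is constant it can be removed by the global flip; if
then `ω x ≠ π x`, weights `1/3, 2/3` on `x` and `y = π⁻¹ (ω x)` together with `p = (3/4) δ_{ω x}`
give the gaps `(2/3) h(1/4)` and `log 2 - (2/3) h(1/4)`, which differ because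
`h(1/4) > (3/4) log 2`, i.e. `3³ < 2⁵`.
-/

open Finset

/-- Binary entropy function `h(p) = -(1-p)·log(1-p) - p·log(p)`.
(Note `Real.log 0 = 0` in Mathlib, implementing the convention `0·log 0 = 0`.) -/
noncomputable def binH (p : ℝ) : ℝ := -(1 - p) * Real.log (1 - p) - p * Real.log p

/-- Average normalized log-likelihood ratio `⟨L(α,p)⟩ = h(∑ α_i p_i) − ∑ α_i h(p_i)`. -/
noncomputable def avgL {ι : Type*} [Fintype ι] (α p : ι → ℝ) : ℝ :=
  binH (∑ i, α i * p i) - ∑ i, α i * binH (p i)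


section

open Real

lemma binH_eq_binEntropy : binH = binEntropy := by
  funext p
  simp only [binH, binEntropy, log_inv]
  ring

lemma binH_flip {c : ℝ} (hc : c = 0 ∨ c = 1) (q : ℝ) : binH (c + (1 - 2 * c) * q) = binH q := by
  rcases hc with rfl | rfl
  · simp
  · rw [binH_eq_binEntropy, ← binEntropy_one_sub]
    ring_nf

lemma three_quarters_mul_log_two_lt_binEntropy : 3 / 4 * log 2 < binEntropy 4⁻¹ := by
  have h27_32 : 3 * log 3 < 5 * log 2 := by
    have := log_lt_log (by norm_num) (show (3 : ℝ) ^ 3 < 2 ^ 5 by norm_num)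
    simpa only [log_pow, Nat.cast_ofNat] using this
  have hquarter : binEntropy 4⁻¹ = 2 * log 2 - 3 / 4 * log 3 := by
    rw [binEntropy, inv_inv, show (1 - 4⁻¹ : ℝ)⁻¹ = 4 / 3 by norm_num,
      log_div (by norm_num) (by norm_num), show (4 : ℝ) = 2 ^ 2 by norm_num, log_pow]
    push_cast
    ring
  linarith

end

lemma exists_const_of_forall_eq {ι : Type*} {γ : ι → ℝ} (hγ : ∀ i, γ i = 0 ∨ γ i = 1)
    (hconst : ∀ i j, γ i = γ j) : ∃ c : ℝ, (c = 0 ∨ c = 1) ∧ ∀ i, γ i = c := by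
  cases isEmpty_or_nonempty ι with
  | inl _ => exact ⟨0, Or.inl rfl, isEmptyElim⟩
  | inr h => obtain ⟨i₀⟩ := h; exact ⟨γ i₀, hγ i₀, fun i => hconst i i₀⟩

section

variable {ι : Type*} [Fintype ι]

lemma avgL_comp_equiv (σ : Equiv.Perm ι) (α p : ι → ℝ) :
    avgL (fun i => α (σ i)) (fun i => p (σ i)) = avgL α p := by
  simp only [avgL, Equiv.sum_comp σ (fun i => α i * p i),
    Equiv.sum_comp σ (fun i => α i * binH (p i))]

lemma avgL_flip {c : ℝ} (hc : c = 0 ∨ c = 1) {α : ι → ℝ} (hα : ∑ i, α i = 1) (p : ι → ℝ) :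
    avgL α (fun i => c + (1 - 2 * c) * p i) = avgL α p := by
  have hmean : ∑ i, α i * (c + (1 - 2 * c) * p i) = c + (1 - 2 * c) * ∑ i, α i * p i := by
    simp only [mul_add, Finset.sum_add_distrib, ← Finset.sum_mul, hα, mul_left_comm _ (1 - 2 * c),
      ← Finset.mul_sum, one_mul]
  simp only [avgL, hmean, binH_flip hc]

lemma avgL_single_add_single [DecidableEq ι] (a b : ι) (s t : ℝ) (p : ι → ℝ) :
    avgL (Pi.single a s + Pi.single b t) p
      = binH (s * p a + t * p b) - (s * binH (p a) + t * binH (p b)) := by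
  simp [avgL, add_mul, Finset.sum_add_distrib, Pi.single_apply]

def PreservesAvgL (π ω : Equiv.Perm ι) (γ : ι → ℝ) : Prop :=
  ∀ α : ι → ℝ, (∀ i, 0 ≤ α i) → ∑ i, α i = 1 →
    ∀ p : ι → ℝ, (∀ i, p i ∈ Set.Icc (0 : ℝ) 1) →
      avgL (fun i => α (π i)) (fun i => γ i + (1 - 2 * γ i) * p (ω i)) = avgL α p

namespace PreservesAvgL

variable {π ω : Equiv.Perm ι} {γ : ι → ℝ}

lemma avgL_eq (H : PreservesAvgL π ω γ) {β : ι → ℝ} (hβ₀ : ∀ i, 0 ≤ β i) (hβ₁ : ∑ i, β i = 1)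
    {p : ι → ℝ} (hp : ∀ i, p i ∈ Set.Icc (0 : ℝ) 1) :
    avgL β (fun i => γ i + (1 - 2 * γ i) * p (ω i)) = avgL β (fun i => p (π i)) := by
  have h := H (fun i => β (π.symm i)) (fun i => hβ₀ _) (by rw [Equiv.sum_comp π.symm β, hβ₁]) p hp
  simp only [Equiv.symm_apply_apply] at h
  rw [h, ← avgL_comp_equiv π]
  simp only [Equiv.symm_apply_apply]

lemma flip_apply_eq (H : PreservesAvgL π ω γ) (hγ : ∀ i, γ i = 0 ∨ γ i = 1) (i j : ι) :
    γ i = γ j := by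
  classical
  by_contra hne
  have h := H.avgL_eq (β := Pi.single i 2⁻¹ + Pi.single j 2⁻¹) (p := fun _ => 4⁻¹)
    (fun k => by simp only [Pi.add_apply, Pi.single_apply]; split_ifs <;> norm_num)
    (by simp [Finset.sum_add_distrib]; norm_num)
    (fun _ => by norm_num)
  -- the two flipped values are `1/4` and `3/4`, which average to `1/2`
  have hsum : γ i + (1 - 2 * γ i) * 4⁻¹ + (γ j + (1 - 2 * γ j) * 4⁻¹) = 1 := by
    rcases hγ i with hi | hi <;> rcases hγ j with hj | hj <;> rw [hi, hj] at hne ⊢ <;>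
      first | exact absurd rfl hne | norm_num
  rw [avgL_single_add_single, avgL_single_add_single, binH_flip (hγ i), binH_flip (hγ j),
    ← mul_add, hsum, mul_one, show (2⁻¹ * 4⁻¹ + 2⁻¹ * 4⁻¹ : ℝ) = 4⁻¹ by norm_num] at h
  have hhalf : binH 2⁻¹ = binH 4⁻¹ := by linarith
  rw [binH_eq_binEntropy, Real.binEntropy_two_inv] at hhalf
  exact (Real.binEntropy_lt_log_two.mpr (by norm_num)).ne' hhalf

lemma eq_of_const_flip {c : ℝ} (hc : c = 0 ∨ c = 1) (H : PreservesAvgL π ω fun _ => c) : ω = π := by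
  classical
  ext x
  by_contra hne
  obtain ⟨y, hπy⟩ : ∃ y, π y = ω x := π.surjective _
  have hxy : x ≠ y := by
    rintro rfl
    exact hne hπy.symm
  have h := H.avgL_eq (β := Pi.single x 3⁻¹ + Pi.single y (2 / 3)) (p := Pi.single (ω x) (3 / 4))
    (fun k => by simp only [Pi.add_apply, Pi.single_apply]; split_ifs <;> norm_num)
    (by simp [Finset.sum_add_distrib]; norm_num)
    (fun k => by simp only [Pi.single_apply]; split_ifs <;> norm_num)
  rw [avgL_flip hc (by simp [Finset.sum_add_distrib]; norm_num), avgL_single_add_single,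
    avgL_single_add_single] at h
  simp only [Pi.single_apply, ω.injective.eq_iff, hπy, if_neg hxy.symm, if_neg (Ne.symm hne),
    if_true] at h
  rw [show (3⁻¹ * (3 / 4) + 2 / 3 * 0 : ℝ) = 4⁻¹ by norm_num,
    show (3⁻¹ * 0 + 2 / 3 * (3 / 4) : ℝ) = 2⁻¹ by norm_num, show (3 / 4 : ℝ) = 1 - 4⁻¹ by norm_num,
    binH_eq_binEntropy, Real.binEntropy_one_sub, Real.binEntropy_zero,
    Real.binEntropy_two_inv] at h
  linarith [three_quarters_mul_log_two_lt_binEntropy]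

end PreservesAvgL

end

theorem lambda_preserving_symmetries_general
    {ι : Type*} [Fintype ι]
    (π ω : Equiv.Perm ι) (γ : ι → ℝ) (hγ : ∀ i, γ i = 0 ∨ γ i = 1) :
    (∀ α : ι → ℝ, (∀ i, 0 ≤ α i) → ∑ i, α i = 1 →
      ∀ p : ι → ℝ, (∀ i, p i ∈ Set.Icc (0 : ℝ) 1) →
        avgL (fun i => α (π i)) (fun i => γ i + (1 - 2 * γ i) * p (ω i)) = avgL α p)
    ↔ (ω = π ∧ ∃ c : ℝ, (c = 0 ∨ c = 1) ∧ ∀ i, γ i = c) := by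
  change PreservesAvgL π ω γ ↔ _
  constructor
  · intro H
    obtain ⟨c, hc, hγc⟩ := exists_const_of_forall_eq hγ (H.flip_apply_eq hγ)
    obtain rfl : γ = fun _ => c := funext hγc
    exact ⟨H.eq_of_const_flip hc, c, hc, hγc⟩
  · rintro ⟨rfl, c, hc, hγc⟩ α _ hα p _
    simp only [hγc]
    rw [avgL_flip hc (by rw [Equiv.sum_comp _ α, hα]), avgL_comp_equiv]

/-- λ-preserving symmetries of the SBM: the transformation
`α'_i = α_{π(i)}`, `p'_i = γ_i + (1 − 2γ_i) p_{ω(i)}` (with `γ_i ∈ {0,1}`) preserves the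
average normalized log-likelihood ratio for every admissible `(α, p)` if and only if
`ω = π` and `γ` is constant. -/
theorem lambda_preserving_symmetries
    {ι : Type*} [Fintype ι] (hcard : 1 < Fintype.card ι)
    (π ω : Equiv.Perm ι) (γ : ι → ℝ) (hγ : ∀ i, γ i = 0 ∨ γ i = 1) :
    (∀ α : ι → ℝ, (∀ i, 0 ≤ α i) → ∑ i, α i = 1 →
      ∀ p : ι → ℝ, (∀ i, p i ∈ Set.Icc (0 : ℝ) 1) →
        avgL (fun i => α (π i)) (fun i => γ i + (1 - 2 * γ i) * p (ω i)) = avgL α p)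
    ↔ (ω = π ∧ ∃ c : ℝ, (c = 0 ∨ c = 1) ∧ ∀ i, γ i = c) :=
  lambda_preserving_symmetries_general π ω γ hγ
end

section
/- Let ι be a nonempty finite index set, let α : ι → ℝ be nonnegative weights with ∑_{i∈ι} α_i = 1, and let λ ≥ 0. Then the sublevel set { p ∈ [0,1]^ι : h(∑_i α_i p_i) − ∑_i α_i h(p_i) ≤ λ } is a convex subset of ℝ^ι. -/
open Finset

/-!
Writing `ρ = ∑ α_i p_i`, the hypothesis `∑ α_i = 1` gives
`L(α, p) = ∑ α_i KL(Ber p_i ‖ Ber ρ)`. Each term is jointly convex in `(p_i, ρ)`, being the sum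
of two perspectives `y · g(x / y)` of the convex function `g(u) = u log u`, and `(p_i, ρ)` depends
linearly on `p`. Hence `L(α, ·)` is convex on the cube `[0,1]^ι`, and so are its sublevel sets.
-/

open Real

section Convex

variable {𝕜 E β ι : Type*} [Semiring 𝕜] [PartialOrder 𝕜] [AddCommMonoid E] [Module 𝕜 E]
  [AddCommMonoid β] [PartialOrder β] [Module 𝕜 β] {s : Set E}

theorem convexOn_finset_sum [IsOrderedAddMonoid β] {t : Finset ι} {f : ι → E → β}
    (hs : Convex 𝕜 s) (hf : ∀ i ∈ t, ConvexOn 𝕜 s (f i)) :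
    ConvexOn 𝕜 s fun x ↦ ∑ i ∈ t, f i x := by
  classical
  induction t using Finset.induction_on with
  | empty => simpa using convexOn_const (0 : β) hs
  | insert i t hi ih =>
    simp only [Finset.sum_insert hi]
    exact (hf i (mem_insert_self i t)).add (ih fun j hj ↦ hf j (mem_insert_of_mem hj))

theorem ConvexOn.insert_zero {f : E → β} (hf : ConvexOn 𝕜 s f)
    (hs : ∀ c : 𝕜, 0 < c → ∀ z ∈ s, c • z ∈ s)
    (hf_smul : ∀ c : 𝕜, 0 ≤ c → ∀ z, f (c • z) = c • f z) : ConvexOn 𝕜 (insert 0 s) f := by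
  have hf0 : f 0 = 0 := by simpa using hf_smul 0 le_rfl 0
  have hmem : ∀ c : 𝕜, 0 ≤ c → ∀ z ∈ insert 0 s, c • z ∈ insert (0 : E) s := by
    rintro c hc z (rfl | hz)
    · simp
    rcases hc.eq_or_lt with rfl | hc
    · simp
    · exact Or.inr (hs c hc z hz)
  refine ⟨?_, ?_⟩
  · rintro x (rfl | hx) y (rfl | hy) a b ha hb hab
    · simp
    · simpa using hmem b hb y (Or.inr hy)
    · simpa using hmem a ha x (Or.inr hx)
    · exact Or.inr (hf.1 hx hy ha hb hab)
  · rintro x (rfl | hx) y (rfl | hy) a b ha hb hab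
    · simp [hf0]
    · simp [hf0, hf_smul b hb]
    · simp [hf0, hf_smul a ha]
    · exact hf.2 hx hy ha hb hab

end Convex

section Perspective

variable {E : Type*} [AddCommGroup E] [Module ℝ E]

/-- Since `0⁻¹ = 0`, the perspective vanishes on `y = 0`. -/
noncomputable def perspective (g : E → ℝ) (z : E × ℝ) : ℝ := z.2 * g (z.2⁻¹ • z.1)

def perspectiveCone (s : Set E) : Set (E × ℝ) := {z | 0 < z.2 ∧ z.2⁻¹ • z.1 ∈ s}

theorem perspective_smul (g : E → ℝ) (c : ℝ) (z : E × ℝ) :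
    perspective g (c • z) = c * perspective g z := by
  rcases eq_or_ne c 0 with rfl | hc
  · simp [perspective]
  · have hz : (c * z.2)⁻¹ * c = z.2⁻¹ := by field_simp
    simp only [perspective, Prod.smul_fst, Prod.smul_snd, smul_eq_mul, smul_smul, hz]
    ring

theorem convexOn_perspective {s : Set E} {g : E → ℝ} (hg : ConvexOn ℝ s g) :
    ConvexOn ℝ (perspectiveCone s) (perspective g) := by
  have key : ∀ ⦃z⦄, z ∈ perspectiveCone s → ∀ ⦃z'⦄, z' ∈ perspectiveCone s →
      ∀ ⦃a b : ℝ⦄, 0 ≤ a → 0 ≤ b → a + b = 1 → a • z + b • z' ∈ perspectiveCone s ∧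
        perspective g (a • z + b • z') ≤ a • perspective g z + b • perspective g z' := by
    rintro ⟨x, u⟩ ⟨hu, hx⟩ ⟨y, v⟩ ⟨hv, hy⟩ a b ha hb hab
    have hw : 0 < a * u + b * v := convex_Ioi (0 : ℝ) hu hv ha hb hab
    set w := a * u + b * v with hw_def
    -- rescaled by `w⁻¹`, the combination of cone points is a convex combination of points of `s`
    have hcomb : w⁻¹ • (a • x + b • y) = (a * u / w) • (u⁻¹ • x) + (b * v / w) • (v⁻¹ • y) := by
      simp only [smul_smul, smul_add]
      congr 2 <;> field_simp
    have hsum : a * u / w + b * v / w = 1 := by rw [← add_div, div_self hw.ne']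
    simp only [perspectiveCone, perspective, Set.mem_ofPred_eq, Prod.smul_mk,
      Prod.mk_add_mk, smul_eq_mul, ← hw_def, hcomb]
    refine ⟨⟨hw, hg.1 hx hy (by positivity) (by positivity) hsum⟩, ?_⟩
    calc w * g ((a * u / w) • (u⁻¹ • x) + (b * v / w) • (v⁻¹ • y))
        ≤ w * (a * u / w * g (u⁻¹ • x) + b * v / w * g (v⁻¹ • y)) :=
          mul_le_mul_of_nonneg_left (hg.2 hx hy (by positivity) (by positivity) hsum) hw.le
      _ = a * (u * g (u⁻¹ • x)) + b * (v * g (v⁻¹ • y)) := by field_simp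
  exact ⟨fun z hz z' hz' a b ha hb hab ↦ (key hz hz' ha hb hab).1,
    fun z hz z' hz' a b ha hb hab ↦ (key hz hz' ha hb hab).2⟩

theorem convexOn_perspective_insert_zero {s : Set E} {g : E → ℝ} (hg : ConvexOn ℝ s g) :
    ConvexOn ℝ (insert 0 (perspectiveCone s)) (perspective g) := by
  refine (convexOn_perspective hg).insert_zero ?_ fun c _ z ↦ perspective_smul g c z
  rintro c hc ⟨x, u⟩ ⟨hu, hx⟩
  have hcu : (c * u)⁻¹ * c = u⁻¹ := by field_simp
  refine ⟨mul_pos hc hu, ?_⟩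
  change (c * u)⁻¹ • c • x ∈ s
  rwa [smul_smul, hcu]

end Perspective

noncomputable def relEntr (x y : ℝ) : ℝ := x * log x - x * log y

/-- For `x > 0`, `relEntr x 0 = x log x` is a junk value (the divergence is `+∞` there), so
the only point with `y = 0` kept is the origin. -/
def relEntrDomain : Set (ℝ × ℝ) := insert 0 (perspectiveCone (Set.Ici 0))

theorem mk_mem_relEntrDomain {x y c : ℝ} (hc : 0 < c) (hx : 0 ≤ x) (hxy : c * x ≤ y) :
    (x, y) ∈ relEntrDomain := by
  rcases (mul_nonneg hc.le hx |>.trans hxy).eq_or_lt with rfl | hy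
  · left
    simp only [Prod.mk_eq_zero, and_true]
    nlinarith
  · exact Or.inr ⟨hy, mul_nonneg (inv_nonneg.2 hy.le) hx⟩

theorem relEntr_eq_perspective {z : ℝ × ℝ} (hz : z ∈ relEntrDomain) :
    relEntr z.1 z.2 = perspective (fun u ↦ u * log u) z := by
  rcases hz with rfl | ⟨hy, hx⟩
  · simp [relEntr, perspective]
  obtain ⟨x, y⟩ := z
  rcases (show 0 ≤ x by simpa [hy] using hx).eq_or_lt with rfl | hx
  · simp [relEntr, perspective]
  · simp only [relEntr, perspective, smul_eq_mul]
    rw [log_mul (inv_ne_zero hy.ne') hx.ne', log_inv]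
    field_simp
    ring

theorem convexOn_relEntr : ConvexOn ℝ relEntrDomain fun z : ℝ × ℝ ↦ relEntr z.1 z.2 :=
  (convexOn_perspective_insert_zero convexOn_mul_log).congr fun _ hz ↦
    (relEntr_eq_perspective hz).symm

/-- `bernoulliKL p q` is the Kullback–Leibler divergence `KL(Ber p ‖ Ber q)`. -/
noncomputable def bernoulliKL (p q : ℝ) : ℝ := relEntr p q + relEntr (1 - p) (1 - q)

theorem convexOn_bernoulliKL :
    ConvexOn ℝ {z : ℝ × ℝ | z ∈ relEntrDomain ∧ (1 - z.1, 1 - z.2) ∈ relEntrDomain}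
      fun z ↦ bernoulliKL z.1 z.2 := by
  have hflip := convexOn_relEntr.comp_affineMap (AffineEquiv.constVSub ℝ (1 : ℝ × ℝ)).toAffineMap
  have hconv := convexOn_relEntr.1.inter hflip.1
  exact (convexOn_relEntr.subset (fun _ hz ↦ hz.1) hconv).add (hflip.subset (fun _ hz ↦ hz.2) hconv)

section avgL

variable {ι : Type*} [Fintype ι] {α : ι → ℝ}

theorem sum_mul_one_sub (hsum : ∑ i, α i = 1) (p : ι → ℝ) :
    ∑ i, α i * (1 - p i) = 1 - ∑ i, α i * p i := by
  simp only [mul_sub, mul_one, Finset.sum_sub_distrib, hsum]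

theorem avgL_eq_sum_bernoulliKL (hsum : ∑ i, α i = 1) (p : ι → ℝ) :
    avgL α p = ∑ i, α i * bernoulliKL (p i) (∑ j, α j * p j) := by
  set ρ := ∑ j, α j * p j
  have hterm : ∀ i, α i * bernoulliKL (p i) ρ = -(α i * binH (p i)) - α i * p i * log ρ
      - α i * (1 - p i) * log (1 - ρ) := fun i ↦ by
    simp only [bernoulliKL, relEntr, binH]; ring
  simp only [hterm, Finset.sum_sub_distrib, Finset.sum_neg_distrib, ← Finset.sum_mul,
    sum_mul_one_sub hsum]
  simp only [avgL, binH]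
  ring

theorem convexOn_avgL (hα : ∀ i, 0 ≤ α i) (hsum : ∑ i, α i = 1) :
    ConvexOn ℝ {p : ι → ℝ | ∀ i, p i ∈ Set.Icc 0 1} (avgL α) := by
  have hcube : Convex ℝ {p : ι → ℝ | ∀ i, p i ∈ Set.Icc 0 1} :=
    fun _ hp _ hq _ _ ha hb hab i ↦ convex_Icc 0 1 (hp i) (hq i) ha hb hab
  refine (convexOn_finset_sum (𝕜 := ℝ) hcube fun i _ ↦ ?_).congr
    fun p _ ↦ (avgL_eq_sum_bernoulliKL hsum p).symm
  rcases (hα i).eq_or_lt with hi | hi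
  · simpa [← hi] using convexOn_const (0 : ℝ) hcube
  let L : (ι → ℝ) →ₗ[ℝ] ℝ × ℝ := (LinearMap.proj i).prod (∑ j, α j • LinearMap.proj j)
  have hle : ∀ x : ι → ℝ, (∀ j, 0 ≤ x j) → α i * x i ≤ ∑ j, α j * x j := fun x hx ↦
    Finset.single_le_sum (f := fun j ↦ α j * x j) (fun j _ ↦ mul_nonneg (hα j) (hx j))
      (Finset.mem_univ i)
  have hmaps : ∀ p ∈ {p : ι → ℝ | ∀ i, p i ∈ Set.Icc 0 1},
      L p ∈ relEntrDomain ∧ (1 - (L p).1, 1 - (L p).2) ∈ relEntrDomain := by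
    intro p hp
    have hcompl := hle (fun j ↦ 1 - p j) fun j ↦ sub_nonneg.2 (hp j).2
    rw [sum_mul_one_sub hsum] at hcompl
    constructor
    · simpa [L] using mk_mem_relEntrDomain hi (hp i).1 (hle p fun j ↦ (hp j).1)
    · simpa [L] using mk_mem_relEntrDomain hi (sub_nonneg.2 (hp i).2) hcompl
  have hterm := (convexOn_bernoulliKL.comp_linearMap L).subset hmaps hcube
  exact (hterm.congr fun p _ ↦ by simp [L]).smul hi.le

end avgL

theorem avgL_sublevel_set_convex_general
    {ι : Type*} [Fintype ι]
    (α : ι → ℝ) (hα : ∀ i, 0 ≤ α i) (hsum : ∑ i, α i = 1)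
    (lam : ℝ) :
    Convex ℝ {p : ι → ℝ | (∀ i, p i ∈ Set.Icc (0 : ℝ) 1) ∧ avgL α p ≤ lam} :=
  (convexOn_avgL hα hsum).convex_le lam

/-- The sublevel set `{ p ∈ [0,1]^ι : L(α,p) ≤ λ }` of the average detectability is a
convex subset of `ℝ^ι`. -/
theorem avgL_sublevel_set_convex
    {ι : Type*} [Fintype ι] [Nonempty ι]
    (α : ι → ℝ) (hα : ∀ i, 0 ≤ α i) (hsum : ∑ i, α i = 1)
    (lam : ℝ) (hlam : 0 ≤ lam) :
    Convex ℝ {p : ι → ℝ | (∀ i, p i ∈ Set.Icc (0 : ℝ) 1) ∧ avgL α p ≤ lam} :=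
  avgL_sublevel_set_convex_general α hα hsum lam
end
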